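/- Let m, n ≥ 3 be integers and d = gcd(m, n). If ν_2(m) ≤ ν_2(n), then z(F_m · L_n) = 2·[m, n]; and if ν_2(m) > ν_2(n), then z(F_m · L_n) = [m, n] · L_d. -/
import Mathlib

/-- The classical Lucas sequence: `L 0 = 2`, `L 1 = 1`, `L (k+2) = L (k+1) + L k`. -/
def lucas : ℕ → ℕ
  | 0 => 2
  | 1 => 1
  | (k + 2) => lucas (k + 1) + lucas k

/-- The order of appearance of `m` in the Fibonacci sequence:
the smallest positive integer `k` such that `m ∣ fib k`. -/
noncomputable def z (m : ℕ) : ℕ :=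
  sInf {k : ℕ | 0 < k ∧ m ∣ Nat.fib k}

open Nat Finset
set_option maxHeartbeats 1000000

lemma lucas_add_two (k : ℕ) : lucas (k + 2) = lucas (k + 1) + lucas k := rfl

lemma lucas_add_fib (n : ℕ) : lucas n + fib n = 2 * fib (n + 1) := by
  induction n using Nat.twoStepInduction with
  | zero => simp [lucas]
  | one => simp [lucas]
  | more n ih1 ih2 =>
    have h1 := Nat.fib_add_two (n := n)
    have h2 := Nat.fib_add_two (n := n + 1)
    rw [lucas_add_two]
    simp only [show n+1+1 = n+2 from rfl, show n+1+2 = n+3 from rfl,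
      show n+2+1 = n+3 from rfl] at *
    omega

lemma lucas_pos (n : ℕ) : 0 < lucas n := by
  induction n using Nat.twoStepInduction with
  | zero => simp [lucas]
  | one => simp [lucas]
  | more n ih1 ih2 => rw [lucas_add_two]; omega

lemma fib_two_mul_lucas (n : ℕ) : fib (2 * n) = fib n * lucas n := by
  have h := Nat.fib_two_mul n
  have h2 := lucas_add_fib n
  have : 2 * fib (n + 1) - fib n = lucas n := by omega
  rw [h, this]

lemma fib_lt_lucas {n : ℕ} (hn : 2 ≤ n) : fib n < lucas n := by
  have h := lucas_add_fib n
  have := Nat.fib_lt_fib_succ hn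
  omega

lemma gcd_fib_lucas_dvd_two (n : ℕ) : Nat.gcd (fib n) (lucas n) ∣ 2 := by
  have hco : Nat.Coprime (fib (n + 1)) (fib n) := (Nat.fib_coprime_fib_succ n).symm
  have h1 : Nat.gcd (fib n) (lucas n) ∣ fib n := Nat.gcd_dvd_left _ _
  have h2 : Nat.gcd (fib n) (lucas n) ∣ 2 * fib (n + 1) := by
    rw [← lucas_add_fib n]
    exact Nat.dvd_add (Nat.gcd_dvd_right _ _) h1
  have h3 : Nat.gcd (fib n) (lucas n) ∣ Nat.gcd (fib n) (2 * fib (n + 1)) :=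
    Nat.dvd_gcd h1 h2
  have h4 : Nat.gcd (fib n) (2 * fib (n + 1)) = Nat.gcd (fib n) 2 :=
    Nat.Coprime.gcd_mul_right_cancel_right 2 hco
  exact h3.trans (h4 ▸ Nat.gcd_dvd_right _ _)



lemma z_mem {N : ℕ} (h : ∃ j, 0 < j ∧ N ∣ fib j) : 0 < z N ∧ N ∣ fib (z N) :=
  Nat.sInf_mem h

lemma z_dvd_iff {N : ℕ} (h : ∃ j, 0 < j ∧ N ∣ fib j) (k : ℕ) :
    N ∣ fib k ↔ z N ∣ k := by
  obtain ⟨hz, hzd⟩ := z_mem h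
  constructor
  · intro hk
    rcases Nat.eq_zero_or_pos k with rfl | hk0
    · exact Dvd.intro 0 rfl
    have hg : N ∣ fib (Nat.gcd k (z N)) := by
      rw [Nat.fib_gcd]
      exact Nat.dvd_gcd hk hzd
    have hgpos : 0 < Nat.gcd k (z N) := Nat.gcd_pos_of_pos_left _ hk0
    have h1 : z N ≤ Nat.gcd k (z N) := Nat.sInf_le ⟨hgpos, hg⟩
    have h2 : Nat.gcd k (z N) ≤ z N := Nat.le_of_dvd hz (Nat.gcd_dvd_right _ _)
    have : Nat.gcd k (z N) = z N := le_antisymm h2 h1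
    rw [← this]
    exact Nat.gcd_dvd_left _ _
  · intro hk
    exact hzd.trans (Nat.fib_dvd _ _ hk)

lemma z_eq {N t : ℕ} (ht : 0 < t) (hdvd : N ∣ fib t)
    (hmin : ∀ k, 0 < k → N ∣ fib k → t ∣ k) : z N = t := by
  have hne : ∃ j, 0 < j ∧ N ∣ fib j := ⟨t, ht, hdvd⟩
  obtain ⟨hz, hzd⟩ := z_mem hne
  have h1 : z N ≤ t := Nat.sInf_le ⟨ht, hdvd⟩
  have h2 : t ∣ z N := hmin _ hz hzd
  exact le_antisymm h1 (Nat.le_of_dvd hz h2)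

lemma dvd_of_fib_dvd_fib {j k : ℕ} (hj : 3 ≤ j) (hk : 0 < k) (h : fib j ∣ fib k) : j ∣ k := by
  have hg : fib j ∣ fib (Nat.gcd j k) := by
    rw [Nat.fib_gcd]; exact Nat.dvd_gcd dvd_rfl h
  have hgpos : 0 < Nat.gcd j k := Nat.gcd_pos_of_pos_right _ hk
  have hfg : 0 < fib (Nat.gcd j k) := Nat.fib_pos.2 hgpos
  have hle : fib j ≤ fib (Nat.gcd j k) := Nat.le_of_dvd hfg hg
  have hgle : Nat.gcd j k ≤ j := Nat.le_of_dvd (by omega) (Nat.gcd_dvd_left _ _)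
  have : j ≤ Nat.gcd j k := by
    by_contra hlt
    push_neg at hlt
    have : fib (Nat.gcd j k) < fib j := by
      rcases Nat.lt_or_ge (Nat.gcd j k) 2 with h2 | h2
      · calc fib (Nat.gcd j k) ≤ fib 1 := by
              interval_cases (Nat.gcd j k) <;> simp
          _ < fib j := by
              have : fib 3 ≤ fib j := Nat.fib_mono hj
              simpa using lt_of_lt_of_le (by norm_num [Nat.fib_one]) this
      · exact (Nat.fib_lt_fib h2).2 hlt
    omega
  have : Nat.gcd j k = j := le_antisymm hgle this
  rw [← this]; exact Nat.gcd_dvd_right _ _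

lemma lucas_dvd_fib_iff {n : ℕ} (hn : 2 ≤ n) (k : ℕ) :
    lucas n ∣ fib k ↔ 2 * n ∣ k := by
  have hLdvd : lucas n ∣ fib (2 * n) := by
    rw [fib_two_mul_lucas]; exact Dvd.intro_left _ rfl
  constructor
  · intro h
    rcases Nat.eq_zero_or_pos k with rfl | hk0
    · exact Dvd.intro 0 rfl
    set g := Nat.gcd k (2 * n) with hg
    have hgdvd : lucas n ∣ fib g := by
      rw [hg, Nat.fib_gcd]; exact Nat.dvd_gcd h hLdvd
    have hgd : g ∣ 2 * n := Nat.gcd_dvd_right _ _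
    have hgpos : 0 < g := Nat.gcd_pos_of_pos_left _ hk0
    have hge : g = 2 * n := by
      by_contra hne
      -- g is a proper divisor of 2n, so g ≤ n
      have hglt : g ≤ n := by
        rcases hgd with ⟨c, hc⟩
        rcases Nat.lt_or_ge c 2 with hc2 | hc2
        · interval_cases c <;> omega
        · have : g * 2 ≤ g * c := Nat.mul_le_mul_left _ hc2
          omega
      have h1 : fib g ≤ fib n := Nat.fib_mono hglt
      have h2 : fib n < lucas n := fib_lt_lucas hn
      have h3 : lucas n ≤ fib g := Nat.le_of_dvd (Nat.fib_pos.2 hgpos) hgdvd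
      omega
    rw [← hge]; exact Nat.gcd_dvd_left _ _
  · intro h
    exact hLdvd.trans (Nat.fib_dvd _ _ h)


def Qf : Matrix (Fin 2) (Fin 2) ℕ := !![1, 1; 1, 0]

lemma Qf_pow_succ (a : ℕ) :
    Qf ^ (a + 1) = fib (a + 1) • Qf + fib a • (1 : Matrix (Fin 2) (Fin 2) ℕ) := by
  induction a with
  | zero => simp [Qf]
  | succ k ih =>
    have hs : Qf ^ (k + 2) = Qf ^ (k + 1) * Qf := pow_succ _ _
    rw [hs, ih, add_mul, smul_mul_assoc, smul_mul_assoc, one_mul]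
    have hQ2 : Qf * Qf = Qf + 1 := by
      ext i j
      fin_cases i <;> fin_cases j <;>
        simp [Qf, Matrix.mul_apply, Fin.sum_univ_two, Matrix.one_apply]
    rw [hQ2, smul_add, Nat.fib_add_two]
    module

lemma Qf_pow_01 (i : ℕ) : (Qf ^ i) 0 1 = fib i := by
  rcases i with _ | a
  · simp [Matrix.one_apply]
  · rw [Qf_pow_succ, Matrix.add_apply, Matrix.smul_apply, Matrix.smul_apply,
      Matrix.one_apply_ne (by decide), smul_eq_mul, smul_eq_mul, mul_zero, add_zero]
    simp [Qf]

lemma fib_mul_eq_sum (a t : ℕ) :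
    fib ((a + 1) * t) = ∑ i ∈ range (t + 1),
      fib (a + 1) ^ i * fib a ^ (t - i) * t.choose i * fib i := by
  have h1 : (Qf ^ ((a + 1) * t)) 0 1 = fib ((a + 1) * t) := Qf_pow_01 _
  rw [← h1, pow_mul, Qf_pow_succ]
  have hc : Commute (fib (a + 1) • Qf) (fib a • (1 : Matrix (Fin 2) (Fin 2) ℕ)) :=
    ((Commute.one_right Qf).smul_right _).smul_left _
  rw [hc.add_pow, Matrix.sum_apply]
  apply Finset.sum_congr rfl
  intro i hi
  rw [smul_pow, smul_pow, one_pow, smul_mul_assoc, mul_smul_comm, mul_one,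
    ← Matrix.diagonal_natCast (n := Fin 2) (t.choose i), Matrix.mul_diagonal,
    Matrix.smul_apply, Matrix.smul_apply, Qf_pow_01, smul_eq_mul, smul_eq_mul]
  push_cast
  ring


lemma three_pow_ge (v : ℕ) (hv : 1 ≤ v) : v + 2 ≤ 3 ^ v := by
  induction v with
  | zero => omega
  | succ k ih =>
    rcases Nat.eq_zero_or_pos k with rfl | hk
    · norm_num
    · have := ih hk
      have : 3 ^ (k + 1) = 3 * 3 ^ k := by ring
      omega

lemma val_le_sub_two {p i : ℕ} (hp : 3 ≤ p) (hi : 2 ≤ i) : i.factorization p ≤ i - 2 := by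
  set v := i.factorization p with hv
  rcases Nat.eq_zero_or_pos v with h0 | h1
  · omega
  · have hdvd : p ^ v ∣ i := Nat.ordProj_dvd i p
    have hle : p ^ v ≤ i := Nat.le_of_dvd (by omega) hdvd
    have h3 : 3 ^ v ≤ p ^ v := Nat.pow_le_pow_left hp v
    have := three_pow_ge v h1
    omega

lemma choose_val_ge {p t i : ℕ} (hp : p.Prime) (hi1 : 1 ≤ i) (hit : i ≤ t) :
    t.factorization p ≤ (t.choose i).factorization p + i.factorization p := by
  obtain ⟨t', rfl⟩ : ∃ t', t = t' + 1 := ⟨t - 1, by omega⟩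
  obtain ⟨i', rfl⟩ : ∃ i', i = i' + 1 := ⟨i - 1, by omega⟩
  have key := Nat.add_one_mul_choose_eq t' i'
  -- (t'+1) * choose t' i' = choose (t'+1) (i'+1) * (i'+1)
  have hC1 : t'.choose i' ≠ 0 := (Nat.choose_pos (by omega)).ne'
  have hC2 : (t' + 1).choose (i' + 1) ≠ 0 := (Nat.choose_pos (by omega)).ne'
  have hfact := congrArg (fun x => x.factorization p) key
  simp only [Nat.factorization_mul (by omega : (t':ℕ) + 1 ≠ 0) hC1,
    Nat.factorization_mul hC2 (by omega : (i':ℕ) + 1 ≠ 0), Finsupp.add_apply] at hfact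
  omega

lemma aux_ie {i e : ℕ} (hi : 2 ≤ i) (he : 1 ≤ e) : i + e ≤ i * e + 1 := by
  obtain ⟨e', rfl⟩ : ∃ e', e = e' + 1 := ⟨e - 1, by omega⟩
  obtain ⟨i', rfl⟩ : ∃ i', i = i' + 2 := ⟨i - 2, by omega⟩
  have hexp : (i' + 2) * (e' + 1) = i' * e' + i' + 2 * e' + 2 := by ring
  omega

lemma fib_lte {p b t : ℕ} (hp : p.Prime) (hp2 : p ≠ 2) (hb : 0 < b) (ht : 0 < t) (hpb : p ∣ fib b) :
    (fib (b * t)).factorization p = (fib b).factorization p + t.factorization p := by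
  have hp3 : 3 ≤ p := by
    have := hp.two_le
    rcases Nat.lt_or_ge p 3 with h | h
    · interval_cases p <;> omega
    · exact h
  have hfb2 : 2 ≤ fib b := hp.two_le.trans (Nat.le_of_dvd (Nat.fib_pos.2 hb) hpb)
  have hb3 : 3 ≤ b := by
    by_contra hb'
    push_neg at hb'
    interval_cases b <;> simp_all
  obtain ⟨a, rfl⟩ : ∃ a, b = a + 1 := ⟨b - 1, by omega⟩
  have ha2 : 2 ≤ a := by omega
  have hfa : 0 < fib a := Nat.fib_pos.2 (by omega)
  have hfb0 : fib (a + 1) ≠ 0 := by omega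
  -- p does not divide fib a
  have hpa : ¬ p ∣ fib a := by
    intro hcon
    have hco : Nat.Coprime (fib a) (fib (a + 1)) := Nat.fib_coprime_fib_succ a
    have : p ∣ Nat.gcd (fib a) (fib (a + 1)) := Nat.dvd_gcd hcon hpb
    rw [hco] at this
    exact Nat.Prime.one_lt hp |>.ne' (Nat.eq_one_of_dvd_one this)
  set e := (fib (a + 1)).factorization p with he
  set s := t.factorization p with hs
  have he1 : 1 ≤ e := (Nat.Prime.factorization_pos_of_dvd hp hfb0 hpb)
  have hfa0 : (fib a).factorization p = 0 := Nat.factorization_eq_zero_of_not_dvd hpa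
  set K := e + s with hK
  -- the summand function
  set F : ℕ → ℕ := fun i => fib (a + 1) ^ i * fib a ^ (t - i) * t.choose i * fib i with hF
  have hid : fib ((a + 1) * t) = ∑ i ∈ range (t + 1), F i := fib_mul_eq_sum a t
  set T1 := F 1 with hT1
  set R := ∑ i ∈ Finset.Ico 2 (t + 1), F i with hR
  have hsplit : fib ((a + 1) * t) = T1 + R := by
    rw [hid, Finset.range_eq_Ico]
    rw [← Finset.sum_Ico_consecutive _ (by omega : 0 ≤ 2) (by omega : 2 ≤ t + 1)]
    have : Finset.Ico 0 2 = {0, 1} := rfl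
    rw [this, Finset.sum_pair (by omega)]
    have : F 0 = 0 := by simp [hF]
    omega
  -- T1 value
  have hT1v : T1 = fib (a + 1) * fib a ^ (t - 1) * t := by
    simp only [hT1, hF, Nat.choose_one_right, Nat.fib_one, pow_one, mul_one]
  have hT1ne : T1 ≠ 0 := by
    rw [hT1v]
    positivity
  have hT1fact : T1.factorization p = K := by
    rw [hT1v, Nat.factorization_mul (by positivity) (by omega),
      Nat.factorization_mul (by omega) (by positivity), Nat.factorization_pow]
    simp [hfa0, ← he, ← hs, hK]
  -- R divisible by p^(K+1)
  have hdvdR : p ^ (K + 1) ∣ R := by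
    apply Finset.dvd_sum
    intro i hi
    simp only [Finset.mem_Ico] at hi
    obtain ⟨hi2, hit⟩ := hi
    have hit' : i ≤ t := by omega
    have hCne : t.choose i ≠ 0 := (Nat.choose_pos hit').ne'
    set fC := (t.choose i).factorization p with hfC
    set fi := i.factorization p with hfi
    have h1 : s ≤ fC + fi := choose_val_ge hp (by omega) hit'
    have h2 : fi ≤ i - 2 := val_le_sub_two hp3 hi2
    have h3 : p ^ fC ∣ t.choose i := Nat.ordProj_dvd _ _
    have h4 : p ^ (i * e) ∣ fib (a + 1) ^ i := by
      have : p ^ e ∣ fib (a + 1) := Nat.ordProj_dvd _ _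
      calc p ^ (i * e) = (p ^ e) ^ i := by rw [← pow_mul, mul_comm]
        _ ∣ fib (a + 1) ^ i := pow_dvd_pow_of_dvd this i
    have hKle : K + 1 ≤ i * e + fC := by
      have := aux_ie hi2 he1
      omega
    calc p ^ (K + 1) ∣ p ^ (i * e + fC) := pow_dvd_pow _ hKle
      _ ∣ fib (a + 1) ^ i * t.choose i := by
          rw [pow_add]
          exact mul_dvd_mul h4 h3
      _ ∣ F i := by
          simp only [hF]
          exact ⟨fib a ^ (t - i) * fib i, by ring⟩
  -- combine
  have hne : fib ((a + 1) * t) ≠ 0 := by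
    have : 0 < (a + 1) * t := by positivity
    simpa [Nat.pos_iff_ne_zero] using Nat.fib_pos.2 this
  have hdvd1 : p ^ K ∣ fib ((a + 1) * t) := by
    rw [hsplit]
    apply Nat.dvd_add
    · rw [← hT1fact]
      exact Nat.ordProj_dvd _ _
    · exact (pow_dvd_pow _ (by omega)).trans hdvdR
  have hnotdvd : ¬ p ^ (K + 1) ∣ fib ((a + 1) * t) := by
    intro hcon
    have : p ^ (K + 1) ∣ T1 := by
      have hT1eq : T1 = fib ((a + 1) * t) - R := by omega
      rw [hT1eq]
      exact Nat.dvd_sub hcon hdvdR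
    have := (Nat.Prime.pow_dvd_iff_le_factorization hp hT1ne).1 this
    omega
  have hle1 : K ≤ (fib ((a + 1) * t)).factorization p :=
    (Nat.Prime.pow_dvd_iff_le_factorization hp hne).1 hdvd1
  have hle2 : (fib ((a + 1) * t)).factorization p ≤ K := by
    by_contra hcon
    push_neg at hcon
    exact hnotdvd ((Nat.Prime.pow_dvd_iff_le_factorization hp hne).2 hcon)
  omega




lemma fib_add_three (j : ℕ) : fib (j + 3) = 2 * fib (j + 1) + fib j := by
  have h0 : fib (j + 2) = fib j + fib (j + 1) := Nat.fib_add_two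
  have h1 : fib (j + 3) = fib (j + 1) + fib (j + 2) := Nat.fib_add_two
  omega

lemma fib_add_six (j : ℕ) : fib (j + 6) = 8 * fib (j + 1) + 5 * fib j := by
  have h0 := fib_add_three j
  have h1 := fib_add_three (j + 1)
  have h2 := fib_add_three (j + 2)
  have h3 := fib_add_three (j + 3)
  have e0 : fib (j + 2) = fib j + fib (j + 1) := Nat.fib_add_two
  simp only [show j+1+3 = j+4 from by ring, show j+2+3 = j+5 from by ring,
    show j+3+3 = j+6 from by ring, show j+1+1 = j+2 from by ring,
    show j+2+1 = j+3 from by ring, show j+3+1 = j+4 from by ring] at *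
  omega

lemma lucas_add_three (j : ℕ) : lucas (j + 3) = 2 * lucas (j + 1) + lucas j := by
  have h0 : lucas (j + 2) = lucas (j + 1) + lucas j := lucas_add_two j
  have h1 : lucas (j + 3) = lucas (j + 2) + lucas (j + 1) := lucas_add_two (j + 1)
  omega

lemma lucas_add_six (j : ℕ) : lucas (j + 6) = 8 * lucas (j + 1) + 5 * lucas j := by
  have h0 := lucas_add_three j
  have h1 := lucas_add_three (j + 1)
  have h2 := lucas_add_three (j + 2)
  have h3 := lucas_add_three (j + 3)
  have e0 : lucas (j + 2) = lucas (j + 1) + lucas j := lucas_add_two j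
  simp only [show j+1+3 = j+4 from by ring, show j+2+3 = j+5 from by ring,
    show j+3+3 = j+6 from by ring, show j+1+1 = j+2 from by ring,
    show j+2+1 = j+3 from by ring, show j+3+1 = j+4 from by ring] at *
  omega

lemma lucas_add_twelve (j : ℕ) : lucas (j + 12) % 8 = lucas j % 8 := by
  have h0 := lucas_add_six j
  have h1 := lucas_add_six (j + 6)
  simp only [show j+6+6 = j+12 from by ring, show j+6+1 = j+7 from by ring] at *
  -- lucas (j+12) = 8 * lucas (j+7) + 5 * (8 * lucas (j+1) + 5 * lucas j)
  omega

-- parity of fib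
lemma fib_mod_two (j : ℕ) : fib j % 2 = if j % 3 = 0 then 0 else 1 := by
  induction j using Nat.strong_induction_on with
  | _ j ih =>
    rcases Nat.lt_or_ge j 3 with h | h
    · interval_cases j <;> simp
    · obtain ⟨j', rfl⟩ : ∃ j', j = j' + 3 := ⟨j - 3, by omega⟩
      have := fib_add_three j'
      have ihj := ih j' (by omega)
      have : fib (j' + 3) % 2 = fib j' % 2 := by omega
      rw [this, ihj]
      have : (j' + 3) % 3 = j' % 3 := by omega
      rw [this]

lemma lucas_mod_two (j : ℕ) : lucas j % 2 = if j % 3 = 0 then 0 else 1 := by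
  induction j using Nat.strong_induction_on with
  | _ j ih =>
    rcases Nat.lt_or_ge j 3 with h | h
    · interval_cases j <;> simp [lucas]
    · obtain ⟨j', rfl⟩ : ∃ j', j = j' + 3 := ⟨j - 3, by omega⟩
      have := lucas_add_three j'
      have ihj := ih j' (by omega)
      have : lucas (j' + 3) % 2 = lucas j' % 2 := by omega
      rw [this, ihj]
      have : (j' + 3) % 3 = j' % 3 := by omega
      rw [this]

lemma fib_three_odd_mod_four {u : ℕ} (hu : u % 2 = 1) : fib (3 * u) % 4 = 2 := by
  obtain ⟨r, rfl⟩ : ∃ r, u = 2 * r + 1 := ⟨u / 2, by omega⟩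
  induction r with
  | zero => decide
  | succ k ih =>
    have ihk := ih (by omega)
    have h6 := fib_add_six (3 * (2 * k + 1))
    have e : 3 * (2 * k + 1) + 6 = 3 * (2 * (k + 1) + 1) := by ring
    rw [e] at h6
    omega

lemma lucas_six_mod_four (w : ℕ) : lucas (6 * w) % 4 = 2 := by
  induction w with
  | zero => decide
  | succ k ih =>
    have h6 := lucas_add_six (6 * k)
    have e : 6 * k + 6 = 6 * (k + 1) := by ring
    rw [e] at h6
    omega

lemma lucas_three_odd_mod_eight {u : ℕ} (hu : u % 2 = 1) : lucas (3 * u) % 8 = 4 := by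
  obtain ⟨r, rfl⟩ : ∃ r, u = 2 * r + 1 := ⟨u / 2, by omega⟩
  induction r with
  | zero => decide
  | succ k ih =>
    have ihk := ih (by omega)
    have h6 := lucas_add_six (3 * (2 * k + 1))
    have e : 3 * (2 * k + 1) + 6 = 3 * (2 * (k + 1) + 1) := by ring
    rw [e] at h6
    omega

-- valuation extraction
lemma fact2_eq_zero {x : ℕ} (h : x % 2 = 1) : x.factorization 2 = 0 :=
  Nat.factorization_eq_zero_of_not_dvd (by omega)

lemma fact2_eq_one {x : ℕ} (h : x % 4 = 2) : x.factorization 2 = 1 := by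
  have hx : x ≠ 0 := by omega
  have h1 : (2 : ℕ) ^ 1 ∣ x := by omega
  have h2 : ¬ (2 : ℕ) ^ 2 ∣ x := by omega
  have hp : Nat.Prime 2 := Nat.prime_two
  have := (hp.pow_dvd_iff_le_factorization hx).1 h1
  have h2' : ¬ 2 ≤ x.factorization 2 := fun hc => h2 ((hp.pow_dvd_iff_le_factorization hx).2 hc)
  omega

lemma fact2_eq_two {x : ℕ} (h : x % 8 = 4) : x.factorization 2 = 2 := by
  have hx : x ≠ 0 := by omega
  have h1 : (2 : ℕ) ^ 2 ∣ x := by omega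
  have h2 : ¬ (2 : ℕ) ^ 3 ∣ x := by omega
  have hp : Nat.Prime 2 := Nat.prime_two
  have := (hp.pow_dvd_iff_le_factorization hx).1 h1
  have h2' : ¬ 3 ≤ x.factorization 2 := fun hc => h2 ((hp.pow_dvd_iff_le_factorization hx).2 hc)
  omega

lemma val2_lucas_not_three {n : ℕ} (h : ¬ 3 ∣ n) : (lucas n).factorization 2 = 0 := by
  apply fact2_eq_zero
  have := lucas_mod_two n
  rw [if_neg (by omega)] at this
  exact this

lemma val2_fib_not_three {n : ℕ} (h : ¬ 3 ∣ n) : (fib n).factorization 2 = 0 := by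
  apply fact2_eq_zero
  have := fib_mod_two n
  rw [if_neg (by omega)] at this
  exact this

lemma val2_lucas_three {v : ℕ} :
    (lucas (3 * v)).factorization 2 = if v % 2 = 1 then 2 else 1 := by
  rcases Nat.even_or_odd v with he | ho
  · obtain ⟨w, rfl⟩ := he
    rw [if_neg (by omega)]
    apply fact2_eq_one
    have e : 3 * (w + w) = 6 * w := by ring
    rw [e]
    exact lucas_six_mod_four w
  · have hv : v % 2 = 1 := Nat.odd_iff.1 ho
    rw [if_pos hv]
    exact fact2_eq_two (lucas_three_odd_mod_eight hv)

lemma val2_fib_three {t : ℕ} (ht : 0 < t) :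
    (fib (3 * t)).factorization 2 = if t % 2 = 1 then 1 else t.factorization 2 + 2 := by
  induction t using Nat.strong_induction_on with
  | _ t ih =>
    rcases Nat.even_or_odd t with he | ho
    · obtain ⟨s, rfl⟩ := he
      have hs : 0 < s := by omega
      have e1 : 3 * (s + s) = 2 * (3 * s) := by ring
      rw [if_neg (by omega), e1, fib_two_mul_lucas]
      have hf0 : fib (3 * s) ≠ 0 := by
        have := Nat.fib_pos.2 (show 0 < 3 * s by omega); omega
      have hl0 : lucas (3 * s) ≠ 0 := (lucas_pos _).ne'
      rw [Nat.factorization_mul hf0 hl0, Finsupp.add_apply]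
      have ihs := ih s (by omega) hs
      have hlv := val2_lucas_three (v := s)
      have hts : (s + s).factorization 2 = s.factorization 2 + 1 := by
        have h2 : (2 * s).factorization 2 = (2 : ℕ).factorization 2 + s.factorization 2 := by
          rw [Nat.factorization_mul (by norm_num) (by omega), Finsupp.add_apply]
        have h3 : (2 : ℕ).factorization 2 = 1 := Nat.Prime.factorization_self Nat.prime_two
        rw [show s + s = 2 * s from by ring]
        omega
      rcases Nat.even_or_odd s with hse | hso
      · have hs2 : s % 2 = 0 := Nat.even_iff.1 hse
        rw [if_neg (by omega)] at ihs
        rw [if_neg (by omega)] at hlv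
        omega
      · have hs2 : s % 2 = 1 := Nat.odd_iff.1 hso
        rw [if_pos hs2] at ihs
        rw [if_pos hs2] at hlv
        have : s.factorization 2 = 0 := fact2_eq_zero hs2
        omega
    · have ht2 : t % 2 = 1 := Nat.odd_iff.1 ho
      rw [if_pos ht2]
      exact fact2_eq_one (fib_three_odd_mod_four ht2)


-- pointwise divisibility criteria
lemma dvd_of_forall_prime_le {x y : ℕ} (hx : x ≠ 0) (hy : y ≠ 0)
    (h : ∀ p, p.Prime → x.factorization p ≤ y.factorization p) : x ∣ y := by
  rw [← Nat.factorization_le_iff_dvd hx hy]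
  intro p
  by_cases hp : p.Prime
  · exact h p hp
  · simp [Nat.factorization_eq_zero_of_not_prime _ hp]

lemma fact_le_of_dvd {x y : ℕ} (hy : y ≠ 0) (h : x ∣ y) (p : ℕ) :
    x.factorization p ≤ y.factorization p := by
  have hx : x ≠ 0 := by rintro rfl; simp at h; omega
  exact (Nat.factorization_le_iff_dvd hx hy).2 h p

lemma fact_mul_apply {x y : ℕ} (hx : x ≠ 0) (hy : y ≠ 0) (p : ℕ) :
    (x * y).factorization p = x.factorization p + y.factorization p := by
  rw [Nat.factorization_mul hx hy, Finsupp.add_apply]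

lemma fact_gcd_apply {x y : ℕ} (hx : x ≠ 0) (hy : y ≠ 0) (p : ℕ) :
    (Nat.gcd x y).factorization p = min (x.factorization p) (y.factorization p) := by
  rw [Nat.factorization_gcd hx hy, Finsupp.inf_apply]

lemma fact_lcm_apply {x y : ℕ} (hx : x ≠ 0) (hy : y ≠ 0) (p : ℕ) :
    (Nat.lcm x y).factorization p = max (x.factorization p) (y.factorization p) := by
  rw [Nat.factorization_lcm hx hy, Finsupp.sup_apply]

lemma fact_two_mul_apply {x : ℕ} (hx : x ≠ 0) (p : ℕ) (hp : p.Prime) :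
    (2 * x).factorization p = (if p = 2 then 1 else 0) + x.factorization p := by
  rw [fact_mul_apply (by norm_num) hx]
  congr 1
  split
  · subst ‹p = 2›; exact Nat.Prime.factorization_self Nat.prime_two
  · exact Nat.factorization_eq_zero_of_not_dvd (by
      intro hd
      have := (Nat.Prime.dvd_of_dvd_pow (n := 1) hp (by simpa using hd))
      have h2 : p = 2 := (Nat.prime_dvd_prime_iff_eq hp Nat.prime_two).1 hd
      exact ‹¬ p = 2› h2)

lemma dvd_of_dvd_two_mul {a n : ℕ} (hn : n ≠ 0) (h1 : a ∣ 2 * n)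
    (h2 : a.factorization 2 ≤ n.factorization 2) : a ∣ n := by
  have ha : a ≠ 0 := by rintro rfl; simp at h1; omega
  apply dvd_of_forall_prime_le ha hn
  intro p hp
  have := fact_le_of_dvd (by omega : 2 * n ≠ 0) h1 p
  rw [fact_two_mul_apply hn p hp] at this
  by_cases hp2 : p = 2
  · subst hp2; exact h2
  · simpa [hp2] using this

lemma two_mul_dvd_of_lt {d m : ℕ} (hm : m ≠ 0) (hd : d ∣ m)
    (h2 : d.factorization 2 < m.factorization 2) : 2 * d ∣ m := by
  have hd0 : d ≠ 0 := by rintro rfl; simp at hd; omega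
  apply dvd_of_forall_prime_le (by omega) hm
  intro p hp
  rw [fact_two_mul_apply hd0 p hp]
  have := fact_le_of_dvd hm hd p
  by_cases hp2 : p = 2
  · subst hp2; simp; omega
  · simpa [hp2] using this

lemma fact2_pos_of_even {u : ℕ} (hu : u % 2 = 0) (h0 : u ≠ 0) : 1 ≤ u.factorization 2 :=
  Nat.Prime.factorization_pos_of_dvd Nat.prime_two h0 (by omega)




lemma val_fib_rank {p : ℕ} (hp : p.Prime) (hp2 : p ≠ 2)
    (hex : ∃ j, 0 < j ∧ p ∣ fib j) {j : ℕ} (hj : j ≠ 0) (hdvd : z p ∣ j) :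
    (fib j).factorization p
      = (fib (z p)).factorization p + (j / z p).factorization p := by
  obtain ⟨hz, hzd⟩ := z_mem hex
  obtain ⟨t, rfl⟩ := hdvd
  have ht : 0 < t := by
    rcases Nat.eq_zero_or_pos t with rfl | h
    · simp at hj
    · exact h
  rw [Nat.mul_div_cancel_left _ hz]
  exact fib_lte hp hp2 hz ht hzd

lemma val_fib_zero_of_not_rank_dvd {p : ℕ}
    (hex : ∃ j, 0 < j ∧ p ∣ fib j) {j : ℕ} (h : ¬ z p ∣ j) :
    (fib j).factorization p = 0 := by
  apply Nat.factorization_eq_zero_of_not_dvd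
  intro hc
  exact h ((z_dvd_iff hex j).1 hc)

lemma val_fib_lucas_split (p : ℕ) {n : ℕ} (hn : n ≠ 0) :
    (fib n).factorization p + (lucas n).factorization p = (fib (2 * n)).factorization p := by
  rw [fib_two_mul_lucas, fact_mul_apply (by simpa [Nat.pos_iff_ne_zero] using Nat.fib_pos.2 (by omega : 0 < n)) (lucas_pos n).ne']

lemma val_two_eq_zero_of_odd_prime {p : ℕ} (hp : p.Prime) (hp2 : p ≠ 2) :
    (2 : ℕ).factorization p = 0 :=
  Nat.factorization_eq_zero_of_not_dvd (fun hd => hp2 ((Nat.prime_dvd_prime_iff_eq hp Nat.prime_two).1 hd))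

lemma rank_facts_of_lucas {p : ℕ} (hp : p.Prime) (hp2 : p ≠ 2)
    (hex : ∃ j, 0 < j ∧ p ∣ fib j) {n : ℕ} (hn : n ≠ 0)
    (hl : 1 ≤ (lucas n).factorization p) :
    z p ∣ 2 * n ∧ ¬ z p ∣ n := by
  have hpl : p ∣ lucas n := (hp.dvd_iff_one_le_factorization (lucas_pos n).ne').2 hl
  have hp2n : p ∣ fib (2 * n) := by
    rw [fib_two_mul_lucas]
    exact hpl.mul_left _
  have h1 : z p ∣ 2 * n := (z_dvd_iff hex _).1 hp2n
  refine ⟨h1, fun hdn => ?_⟩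
  obtain ⟨hz, hzd⟩ := z_mem hex
  have hsplit := val_fib_lucas_split p hn
  have hvn := val_fib_rank hp hp2 hex hn hdn
  have hv2n := val_fib_rank hp hp2 hex (by omega : 2 * n ≠ 0) h1
  have hdiv : 2 * n / z p = 2 * (n / z p) := by
    obtain ⟨t, rfl⟩ := hdn
    rw [Nat.mul_div_cancel_left _ hz, ← Nat.mul_assoc, Nat.mul_comm 2 (z p), Nat.mul_assoc,
      Nat.mul_div_cancel_left _ hz]
  have hndvd0 : n / z p ≠ 0 := by
    obtain ⟨t, rfl⟩ := hdn
    rw [Nat.mul_div_cancel_left _ hz]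
    rintro rfl; simp at hn
  have h2t : (2 * (n / z p)).factorization p = (n / z p).factorization p := by
    rw [fact_mul_apply (by norm_num) hndvd0, val_two_eq_zero_of_odd_prime hp hp2,
      Nat.zero_add]
  rw [hdiv, h2t] at hv2n
  omega



lemma fact2_even_of_pos {u : ℕ} (h0 : u ≠ 0) (h : 1 ≤ u.factorization 2) : u % 2 = 0 := by
  have := (Nat.Prime.dvd_iff_one_le_factorization Nat.prime_two h0).2 h
  omega

lemma rank_dvd_two_gcd {a m n : ℕ} (hm : m ≠ 0) (hn : n ≠ 0)
    (ham : a ∣ m) (h2n : a ∣ 2 * n) : a ∣ 2 * Nat.gcd m n := by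
  have ha0 : a ≠ 0 := by rintro rfl; simp at ham; omega
  have hg0 : Nat.gcd m n ≠ 0 := Nat.pos_iff_ne_zero.1 (Nat.gcd_pos_of_pos_left _ (by omega))
  apply dvd_of_forall_prime_le ha0 (by omega)
  intro p hp
  rw [fact_two_mul_apply hg0 p hp, fact_gcd_apply (by omega) hn]
  have h1 := fact_le_of_dvd hm ham p
  have h2 := fact_le_of_dvd (by omega : 2 * n ≠ 0) h2n p
  rw [fact_two_mul_apply hn p hp] at h2
  by_cases hp2 : p = 2
  · subst hp2; simp at *; omega
  · simp [hp2] at *; omega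

lemma val2_fib_of_three_dvd {m : ℕ} (h3 : 3 ∣ m) (hm : m ≠ 0) :
    (fib m).factorization 2 = if (m / 3) % 2 = 1 then 1 else m.factorization 2 + 2 := by
  obtain ⟨u, rfl⟩ := h3
  rw [Nat.mul_div_cancel_left _ (by norm_num)]
  have hu : 0 < u := by omega
  have h3f : (3 : ℕ).factorization 2 = 0 := Nat.factorization_eq_zero_of_not_dvd (by omega)
  have he : (3 * u).factorization 2 = u.factorization 2 := by
    rw [fact_mul_apply (by norm_num) (by omega), h3f, Nat.zero_add]
  rw [he, val2_fib_three hu]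

lemma val2_lucas_of_three_dvd {n : ℕ} (h3 : 3 ∣ n) :
    (lucas n).factorization 2 = if (n / 3) % 2 = 1 then 2 else 1 := by
  obtain ⟨v, rfl⟩ := h3
  rw [Nat.mul_div_cancel_left _ (by norm_num)]
  exact val2_lucas_three

lemma val2_three_mul {x : ℕ} (hx : x ≠ 0) : (3 * x).factorization 2 = x.factorization 2 := by
  rw [fact_mul_apply (by norm_num) hx,
    Nat.factorization_eq_zero_of_not_dvd (by omega : ¬ (2:ℕ) ∣ 3), Nat.zero_add]

lemma main_case1 (m n : ℕ) (hm : 3 ≤ m) (hn : 3 ≤ n)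
    (h12 : m.factorization 2 ≤ n.factorization 2) :
    z (Nat.fib m * lucas n) = 2 * Nat.lcm m n := by
  have hm0 : m ≠ 0 := by omega
  have hn0 : n ≠ 0 := by omega
  set M := Nat.lcm m n with hM
  have hmM : m ∣ M := Nat.dvd_lcm_left _ _
  have hnM : n ∣ M := Nat.dvd_lcm_right _ _
  have hM0 : M ≠ 0 := Nat.lcm_ne_zero hm0 hn0
  have hfm0 : fib m ≠ 0 := (Nat.fib_pos.2 (by omega)).ne'
  have hln0 : lucas n ≠ 0 := (lucas_pos n).ne'
  have hN0 : fib m * lucas n ≠ 0 := Nat.mul_ne_zero hfm0 hln0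
  have hf2M0 : fib (2 * M) ≠ 0 := (Nat.fib_pos.2 (by omega)).ne'
  have hMn2 : M.factorization 2 = n.factorization 2 := by
    rw [hM, fact_lcm_apply hm0 hn0]; omega
  apply z_eq (by omega)
  · -- membership : fib m * lucas n ∣ fib (2 * M)
    apply dvd_of_forall_prime_le hN0 hf2M0
    intro p hp
    rw [fact_mul_apply hfm0 hln0]
    by_cases hLp : (lucas n).factorization p = 0
    · have hd : fib m ∣ fib (2 * M) := Nat.fib_dvd _ _ (hmM.trans (dvd_mul_left M 2))
      have := fact_le_of_dvd hf2M0 hd p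
      omega
    by_cases hFp : (fib m).factorization p = 0
    · have hd : lucas n ∣ fib (2 * M) :=
        (lucas_dvd_fib_iff (by omega) _).2 (mul_dvd_mul_left 2 hnM)
      have := fact_le_of_dvd hf2M0 hd p
      omega
    by_cases hp2 : p = 2
    · subst hp2
      have h3m : 3 ∣ m := by
        by_contra h
        exact hFp (val2_fib_not_three h)
      have h3n : 3 ∣ n := by
        by_contra h
        exact hLp (val2_lucas_not_three h)
      have h3M : 3 ∣ M := h3m.trans hmM
      have hfm := val2_fib_of_three_dvd h3m hm0
      have hfn := val2_lucas_of_three_dvd h3n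
      have hf2Mval : (fib (2 * M)).factorization 2 = M.factorization 2 + 3 := by
        obtain ⟨w, hw⟩ := h3M
        have hw0 : w ≠ 0 := by rintro rfl; omega
        have he : 2 * M = 3 * (2 * w) := by omega
        rw [he, val2_fib_three (by omega)]
        have h2w : (2 * w) % 2 = 0 := by omega
        rw [if_neg (by omega)]
        have h2w' : (2 * w).factorization 2 = 1 + w.factorization 2 := by
          rw [fact_two_mul_apply hw0 2 Nat.prime_two]; simp
        have hMw : M.factorization 2 = w.factorization 2 := by
          rw [hw, val2_three_mul hw0]
        omega
      -- relations between u := m/3, v := n/3 valuations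
      obtain ⟨u, hu⟩ := h3m
      obtain ⟨v, hv⟩ := h3n
      have hu0 : u ≠ 0 := by omega
      have hv0 : v ≠ 0 := by omega
      have hud : m / 3 = u := by omega
      have hvd : n / 3 = v := by omega
      rw [hud] at hfm
      rw [hvd] at hfn
      have hum : u.factorization 2 = m.factorization 2 := by rw [hu, val2_three_mul hu0]
      have hvn : v.factorization 2 = n.factorization 2 := by rw [hv, val2_three_mul hv0]
      rw [hf2Mval, hfm, hfn, hMn2]
      rcases Nat.eq_zero_or_pos (u % 2) with hue | huo
      · -- u even: m.factorization 2 ≥ 1, hence n too, hence v even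
        have h1 : 1 ≤ u.factorization 2 := fact2_pos_of_even hue hu0
        have hv2 : v % 2 = 0 := by
          apply fact2_even_of_pos hv0
          omega
        rw [if_neg (by omega), if_neg (by omega)]
        omega
      · have hu1 : u % 2 = 1 := by omega
        have hufz : u.factorization 2 = 0 := fact2_eq_zero hu1
        rw [if_pos hu1]
        rcases Nat.eq_zero_or_pos (v % 2) with hve | hvo
        · rw [if_neg (by omega)]; omega
        · rw [if_pos (by omega)]
          have : v.factorization 2 = 0 := fact2_eq_zero (by omega)
          omega
    · -- p odd : contradiction, p cannot divide both fib m and lucas n here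
      exfalso
      have hpm : p ∣ fib m := (hp.dvd_iff_one_le_factorization hfm0).2 (by omega)
      have hex : ∃ j, 0 < j ∧ p ∣ fib j := ⟨m, by omega, hpm⟩
      have ham : z p ∣ m := (z_dvd_iff hex m).1 hpm
      obtain ⟨h2n, hnn⟩ := rank_facts_of_lucas hp hp2 hex hn0 (by omega)
      have h2a : (z p).factorization 2 ≤ n.factorization 2 :=
        le_trans (fact_le_of_dvd hm0 ham 2) h12
      exact hnn (dvd_of_dvd_two_mul hn0 h2n h2a)
  · -- minimality
    intro k hk hdvd
    have hk0 : k ≠ 0 := by omega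
    have hfmk : fib m ∣ fib k := (Dvd.intro _ rfl).trans hdvd
    have hlnk : lucas n ∣ fib k := (Dvd.intro_left _ rfl).trans hdvd
    have hdm : m ∣ k := dvd_of_fib_dvd_fib hm hk hfmk
    have hd2n : 2 * n ∣ k := (lucas_dvd_fib_iff (by omega) k).1 hlnk
    apply dvd_of_forall_prime_le (by omega) hk0
    intro p hp
    rw [fact_two_mul_apply hM0 p hp, fact_lcm_apply hm0 hn0]
    have h1 := fact_le_of_dvd hk0 hdm p
    have h2 := fact_le_of_dvd hk0 hd2n p
    rw [fact_two_mul_apply hn0 p hp] at h2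
    by_cases hp2 : p = 2
    · subst hp2; simp at *; omega
    · simp [hp2] at *; omega
lemma main_case2 (m n : ℕ) (hm : 3 ≤ m) (hn : 3 ≤ n)
    (h21 : n.factorization 2 < m.factorization 2) :
    z (Nat.fib m * lucas n) = Nat.lcm m n * lucas (Nat.gcd m n) := by
  have hm0 : m ≠ 0 := by omega
  have hn0 : n ≠ 0 := by omega
  set d := Nat.gcd m n with hdd
  set M := Nat.lcm m n with hM
  have hd0 : d ≠ 0 := Nat.pos_iff_ne_zero.1 (Nat.gcd_pos_of_pos_left _ (by omega))
  have hdm : d ∣ m := Nat.gcd_dvd_left _ _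
  have hdn : d ∣ n := Nat.gcd_dvd_right _ _
  have hmM : m ∣ M := Nat.dvd_lcm_left _ _
  have hnM : n ∣ M := Nat.dvd_lcm_right _ _
  have hM0 : M ≠ 0 := Nat.lcm_ne_zero hm0 hn0
  have hfm0 : fib m ≠ 0 := (Nat.fib_pos.2 (by omega)).ne'
  have hln0 : lucas n ≠ 0 := (lucas_pos n).ne'
  have hld0 : lucas d ≠ 0 := (lucas_pos d).ne'
  have hN0 : fib m * lucas n ≠ 0 := Nat.mul_ne_zero hfm0 hln0
  have hd2 : d.factorization 2 = n.factorization 2 := by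
    rw [hdd, fact_gcd_apply hm0 hn0]; omega
  have hMm2 : M.factorization 2 = m.factorization 2 := by
    rw [hM, fact_lcm_apply hm0 hn0]; omega
  have hdm2 : 2 * d ∣ m := two_mul_dvd_of_lt hm0 hdm (by omega)
  have h2nM : 2 * n ∣ M := by
    apply dvd_of_forall_prime_le (by omega) hM0
    intro p hp
    rw [fact_two_mul_apply hn0 p hp, hM, fact_lcm_apply hm0 hn0]
    by_cases hp2 : p = 2
    · subst hp2; simp only [if_pos rfl]; simp; omega
    · simp only [if_neg hp2, Nat.zero_add]; omega
  set T := M * lucas d with hT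
  have hT0 : T ≠ 0 := Nat.mul_ne_zero hM0 hld0
  have hfT0 : fib T ≠ 0 := (Nat.fib_pos.2 (by omega)).ne'
  have hMT : M ∣ T := Dvd.intro _ rfl
  have hkey : m * (2 * n) = (2 * d) * M := by
    have h := Nat.gcd_mul_lcm m n
    calc m * (2 * n) = 2 * (m * n) := by ring
      _ = 2 * (d * M) := by rw [← h]
      _ = (2 * d) * M := by ring
  apply z_eq (by omega)
  · -- membership
    apply dvd_of_forall_prime_le hN0 hfT0
    intro p hp
    rw [fact_mul_apply hfm0 hln0]
    by_cases hLp : (lucas n).factorization p = 0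
    · have hd' : fib m ∣ fib T := Nat.fib_dvd _ _ (hmM.trans hMT)
      have := fact_le_of_dvd hfT0 hd' p
      omega
    by_cases hFp : (fib m).factorization p = 0
    · have hd' : lucas n ∣ fib T :=
        (lucas_dvd_fib_iff (by omega) _).2 (h2nM.trans hMT)
      have := fact_le_of_dvd hfT0 hd' p
      omega
    by_cases hp2 : p = 2
    · subst hp2
      have h3m : 3 ∣ m := by by_contra h; exact hFp (val2_fib_not_three h)
      have h3n : 3 ∣ n := by by_contra h; exact hLp (val2_lucas_not_three h)
      have h3d : 3 ∣ d := Nat.dvd_gcd h3m h3n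
      have h3M : 3 ∣ M := h3m.trans hmM
      -- fib m valuation: m/3 is even since m.factorization 2 ≥ 1
      have hfm2pos : 1 ≤ m.factorization 2 := by omega
      have hfmv : (fib m).factorization 2 = m.factorization 2 + 2 := by
        rw [val2_fib_of_three_dvd h3m hm0, if_neg ?_]
        obtain ⟨u, hu⟩ := h3m
        have hu0 : u ≠ 0 := by omega
        have : m / 3 = u := by omega
        rw [this]
        have hfu : u.factorization 2 = m.factorization 2 := by
          rw [hu, val2_three_mul hu0]
        have := fact2_even_of_pos hu0 (by omega)
        omega
      have hlnv := val2_lucas_of_three_dvd h3n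
      have hldv := val2_lucas_of_three_dvd h3d
      -- parity link between n/3 and d/3
      obtain ⟨v, hv⟩ := h3n
      obtain ⟨w, hw⟩ := h3d
      have hv0 : v ≠ 0 := by omega
      have hw0 : w ≠ 0 := by omega
      have hvq : n / 3 = v := by omega
      have hwq : d / 3 = w := by omega
      rw [hvq] at hlnv
      rw [hwq] at hldv
      have hfv : v.factorization 2 = n.factorization 2 := by rw [hv, val2_three_mul hv0]
      have hfw : w.factorization 2 = n.factorization 2 := by
        rw [hw, val2_three_mul hw0] at hd2
        exact hd2
      -- fib T valuation
      have hfTv : (fib T).factorization 2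
          = M.factorization 2 + (lucas d).factorization 2 + 2 := by
        obtain ⟨W, hW⟩ := h3M
        have hW0 : W ≠ 0 := by rintro rfl; omega
        have hTe : T = 3 * (W * lucas d) := by rw [hT, hW]; ring
        have hWl0 : W * lucas d ≠ 0 := Nat.mul_ne_zero hW0 hld0
        have hfWl : (W * lucas d).factorization 2
            = M.factorization 2 + (lucas d).factorization 2 := by
          rw [fact_mul_apply hW0 hld0]
          have : M.factorization 2 = W.factorization 2 := by rw [hW, val2_three_mul hW0]
          omega
        rw [hTe, val2_fib_three (by omega), if_neg ?_]
        · have hTq : T / 3 = W * lucas d := by omega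
          omega
        · have : 1 ≤ (W * lucas d).factorization 2 := by omega
          have := fact2_even_of_pos hWl0 this
          omega
      rw [hfmv, hfTv, hMm2]
      -- cases on parity of v
      rcases Nat.eq_zero_or_pos (v % 2) with hve | hvo
      · have h1 : 1 ≤ v.factorization 2 := fact2_pos_of_even hve hv0
        have hwe : w % 2 = 0 := fact2_even_of_pos hw0 (by omega)
        rw [if_neg (by omega)] at hlnv
        rw [if_neg (by omega)] at hldv
        omega
      · have hv1 : v % 2 = 1 := by omega
        have hfv0 : v.factorization 2 = 0 := fact2_eq_zero hv1
        have hw1 : w % 2 = 1 := by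
          rcases Nat.eq_zero_or_pos (w % 2) with hwe | hwo
          · have := fact2_pos_of_even hwe hw0; omega
          · omega
        rw [if_pos hv1] at hlnv
        rw [if_pos hw1] at hldv
        omega
    · -- p odd
      have hpm : p ∣ fib m := (hp.dvd_iff_one_le_factorization hfm0).2 (by omega)
      have hex : ∃ j, 0 < j ∧ p ∣ fib j := ⟨m, by omega, hpm⟩
      obtain ⟨hz, hzd⟩ := z_mem hex
      have ham : z p ∣ m := (z_dvd_iff hex m).1 hpm
      obtain ⟨h2n, hnn⟩ := rank_facts_of_lucas hp hp2 hex hn0 (by omega)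
      have had2 : z p ∣ 2 * d := rank_dvd_two_gcd hm0 hn0 ham h2n
      have hand : ¬ z p ∣ d := fun h => hnn (h.trans hdn)
      have hamM : z p ∣ M := ham.trans hmM
      obtain ⟨t1, ht1⟩ := ham
      obtain ⟨t2, ht2⟩ := h2n
      obtain ⟨t0, ht0⟩ := had2
      obtain ⟨tM, htM⟩ := hamM
      have ht1p : 0 < t1 := by rcases Nat.eq_zero_or_pos t1 with rfl | h; · omega
                               · exact h
      have ht2p : 0 < t2 := by rcases Nat.eq_zero_or_pos t2 with rfl | h; · omega
                               · exact h
      have ht0p : 0 < t0 := by rcases Nat.eq_zero_or_pos t0 with rfl | h; · omega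
                               · exact h
      have htMp : 0 < tM := by rcases Nat.eq_zero_or_pos tM with rfl | h; · omega
                               · exact h
      set c := (fib (z p)).factorization p with hc
      have hvm : (fib m).factorization p = c + t1.factorization p := by
        rw [ht1]; exact fib_lte hp hp2 hz ht1p hzd
      have hv2n : (fib (2 * n)).factorization p = c + t2.factorization p := by
        rw [ht2]; exact fib_lte hp hp2 hz ht2p hzd
      have hvln : (lucas n).factorization p = c + t2.factorization p := by
        have hs := val_fib_lucas_split p hn0
        have h0 := val_fib_zero_of_not_rank_dvd hex hnn
        omega
      have hv2d : (fib (2 * d)).factorization p = c + t0.factorization p := by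
        rw [ht0]; exact fib_lte hp hp2 hz ht0p hzd
      have hvld : (lucas d).factorization p = c + t0.factorization p := by
        have hs := val_fib_lucas_split p hd0
        have h0 := val_fib_zero_of_not_rank_dvd hex hand
        omega
      have hvT : (fib T).factorization p = c + (tM * lucas d).factorization p := by
        have hTe : T = z p * (tM * lucas d) := by rw [hT, htM]; ring
        rw [hTe]
        exact fib_lte hp hp2 hz (by positivity) hzd
      have htt : t1 * t2 = t0 * tM := by
        have hkey' := hkey
        rw [ht1, ht2, ht0, htM] at hkey'
        have h2 : (z p * z p) * (t1 * t2) = (z p * z p) * (t0 * tM) := by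
          calc (z p * z p) * (t1 * t2) = (z p * t1) * (z p * t2) := by ring
            _ = (z p * t0) * (z p * tM) := hkey'
            _ = (z p * z p) * (t0 * tM) := by ring
        exact Nat.eq_of_mul_eq_mul_left (by positivity) h2
      have hfeq : t1.factorization p + t2.factorization p
          = t0.factorization p + tM.factorization p := by
        have h1 : (t1 * t2).factorization p = t1.factorization p + t2.factorization p :=
          fact_mul_apply (by omega) (by omega) p
        have h2 : (t0 * tM).factorization p = t0.factorization p + tM.factorization p :=
          fact_mul_apply (by omega) (by omega) p
        rw [htt] at h1
        omega
      have hvtMl : (tM * lucas d).factorization p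
          = tM.factorization p + (lucas d).factorization p :=
        fact_mul_apply (by omega) hld0 p
      omega
  · -- minimality
    intro k hk hdvd
    have hk0 : k ≠ 0 := by omega
    have hfk0 : fib k ≠ 0 := (Nat.fib_pos.2 (by omega)).ne'
    have hfmk : fib m ∣ fib k := (Dvd.intro _ rfl).trans hdvd
    have hlnk : lucas n ∣ fib k := (Dvd.intro_left _ rfl).trans hdvd
    have hdmk : m ∣ k := dvd_of_fib_dvd_fib hm hk hfmk
    have hd2nk : 2 * n ∣ k := (lucas_dvd_fib_iff (by omega) k).1 hlnk
    have hMk : M ∣ k := by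
      apply dvd_of_forall_prime_le hM0 hk0
      intro p hp
      rw [hM, fact_lcm_apply hm0 hn0]
      have h1 := fact_le_of_dvd hk0 hdmk p
      have h2 := fact_le_of_dvd hk0 hd2nk p
      rw [fact_two_mul_apply hn0 p hp] at h2
      by_cases hp2 : p = 2
      · subst hp2; simp at *; omega
      · simp [hp2] at *; omega
    have hprod : (fib m).factorization + (lucas n).factorization ≤ (fib k).factorization := by
      rw [← Nat.factorization_mul hfm0 hln0]
      exact (Nat.factorization_le_iff_dvd hN0 hfk0).2 hdvd
    apply dvd_of_forall_prime_le hT0 hk0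
    intro p hp
    rw [fact_mul_apply hM0 hld0]
    have hMkp := fact_le_of_dvd hk0 hMk p
    by_cases hLdp : (lucas d).factorization p = 0
    · omega
    have hprodp : (fib m).factorization p + (lucas n).factorization p
        ≤ (fib k).factorization p := by
      have := hprod p
      simpa using this
    by_cases hp2 : p = 2
    · subst hp2
      have h3d : 3 ∣ d := by by_contra h; exact hLdp (val2_lucas_not_three h)
      have h3m : 3 ∣ m := h3d.trans hdm
      have h3n : 3 ∣ n := h3d.trans hdn
      have hfm2pos : 1 ≤ m.factorization 2 := by omega
      have hfmv : (fib m).factorization 2 = m.factorization 2 + 2 := by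
        rw [val2_fib_of_three_dvd h3m hm0, if_neg ?_]
        obtain ⟨u, hu⟩ := h3m
        have hu0 : u ≠ 0 := by omega
        have : m / 3 = u := by omega
        rw [this]
        have hfu : u.factorization 2 = m.factorization 2 := by
          rw [hu, val2_three_mul hu0]
        have := fact2_even_of_pos hu0 (by omega)
        omega
      have hlnv := val2_lucas_of_three_dvd h3n
      have hldv := val2_lucas_of_three_dvd h3d
      obtain ⟨v, hv⟩ := h3n
      obtain ⟨w, hw⟩ := h3d
      have hv0 : v ≠ 0 := by omega
      have hw0 : w ≠ 0 := by omega
      have hvq : n / 3 = v := by omega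
      have hwq : d / 3 = w := by omega
      rw [hvq] at hlnv
      rw [hwq] at hldv
      have hfv : v.factorization 2 = n.factorization 2 := by rw [hv, val2_three_mul hv0]
      have hfw : w.factorization 2 = n.factorization 2 := by
        rw [hw, val2_three_mul hw0] at hd2
        exact hd2
      have hBeq : (lucas n).factorization 2 = (lucas d).factorization 2 := by
        rcases Nat.eq_zero_or_pos (v % 2) with hve | hvo
        · have h1 : 1 ≤ v.factorization 2 := fact2_pos_of_even hve hv0
          have hwe : w % 2 = 0 := fact2_even_of_pos hw0 (by omega)
          rw [if_neg (by omega)] at hlnv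
          rw [if_neg (by omega)] at hldv
          omega
        · have hv1 : v % 2 = 1 := by omega
          have hfv0 : v.factorization 2 = 0 := fact2_eq_zero hv1
          have hw1 : w % 2 = 1 := by
            rcases Nat.eq_zero_or_pos (w % 2) with hwe | hwo
            · have := fact2_pos_of_even hwe hw0; omega
            · omega
          rw [if_pos hv1] at hlnv
          rw [if_pos hw1] at hldv
          omega
      have hBpos : 1 ≤ (lucas d).factorization 2 := by omega
      -- so fib k has 2-valuation at least 4
      have hfk4 : 4 ≤ (fib k).factorization 2 := by omega
      have h3k : 3 ∣ k := by
        by_contra h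
        have := val2_fib_not_three h
        omega
      have hfkv := val2_fib_of_three_dvd h3k hk0
      rcases Nat.eq_zero_or_pos ((k / 3) % 2) with hke | hko
      · rw [if_neg (by omega)] at hfkv
        omega
      · rw [if_pos (by omega)] at hfkv
        omega
    · -- p odd dividing lucas d
      have hpld : p ∣ lucas d := (hp.dvd_iff_one_le_factorization hld0).2 (by omega)
      have hpf2d : p ∣ fib (2 * d) := by
        rw [fib_two_mul_lucas]; exact hpld.mul_left _
      have hex : ∃ j, 0 < j ∧ p ∣ fib j := ⟨2 * d, by omega, hpf2d⟩
      obtain ⟨hz, hzd⟩ := z_mem hex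
      obtain ⟨h2d, hndd⟩ := rank_facts_of_lucas hp hp2 hex hd0 (by omega)
      have ham : z p ∣ m := h2d.trans hdm2
      have hnn : ¬ z p ∣ n := by
        intro h
        apply hndd
        apply dvd_of_dvd_two_mul hd0 h2d
        have := fact_le_of_dvd hn0 h 2
        omega
      have h2n : z p ∣ 2 * n := h2d.trans (mul_dvd_mul_left 2 hdn)
      have hpk : p ∣ fib k := (hzd.trans (Nat.fib_dvd _ _ ham)).trans hfmk
      have hak : z p ∣ k := (z_dvd_iff hex k).1 hpk
      have hamM : z p ∣ M := ham.trans hmM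
      obtain ⟨t1, ht1⟩ := ham
      obtain ⟨t2, ht2⟩ := h2n
      obtain ⟨t0, ht0⟩ := h2d
      obtain ⟨tM, htM⟩ := hamM
      obtain ⟨tk, htk⟩ := hak
      have ht1p : 0 < t1 := by rcases Nat.eq_zero_or_pos t1 with rfl | h; · omega
                               · exact h
      have ht2p : 0 < t2 := by rcases Nat.eq_zero_or_pos t2 with rfl | h; · omega
                               · exact h
      have ht0p : 0 < t0 := by rcases Nat.eq_zero_or_pos t0 with rfl | h; · omega
                               · exact h
      have htMp : 0 < tM := by rcases Nat.eq_zero_or_pos tM with rfl | h; · omega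
                               · exact h
      have htkp : 0 < tk := by rcases Nat.eq_zero_or_pos tk with rfl | h; · omega
                               · exact h
      set c := (fib (z p)).factorization p with hc
      have hvm : (fib m).factorization p = c + t1.factorization p := by
        rw [ht1]; exact fib_lte hp hp2 hz ht1p hzd
      have hv2n : (fib (2 * n)).factorization p = c + t2.factorization p := by
        rw [ht2]; exact fib_lte hp hp2 hz ht2p hzd
      have hvln : (lucas n).factorization p = c + t2.factorization p := by
        have hs := val_fib_lucas_split p hn0
        have h0 := val_fib_zero_of_not_rank_dvd hex hnn
        omega
      have hv2d : (fib (2 * d)).factorization p = c + t0.factorization p := by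
        rw [ht0]; exact fib_lte hp hp2 hz ht0p hzd
      have hvld : (lucas d).factorization p = c + t0.factorization p := by
        have hs := val_fib_lucas_split p hd0
        have h0 := val_fib_zero_of_not_rank_dvd hex hndd
        omega
      have hvk : (fib k).factorization p = c + tk.factorization p := by
        rw [htk]; exact fib_lte hp hp2 hz htkp hzd
      have htt : t1 * t2 = t0 * tM := by
        have hkey' := hkey
        rw [ht1, ht2, ht0, htM] at hkey'
        have h2 : (z p * z p) * (t1 * t2) = (z p * z p) * (t0 * tM) := by
          calc (z p * z p) * (t1 * t2) = (z p * t1) * (z p * t2) := by ring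
            _ = (z p * t0) * (z p * tM) := hkey'
            _ = (z p * z p) * (t0 * tM) := by ring
        exact Nat.eq_of_mul_eq_mul_left (by positivity) h2
      have hfeq : t1.factorization p + t2.factorization p
          = t0.factorization p + tM.factorization p := by
        have h1 : (t1 * t2).factorization p = t1.factorization p + t2.factorization p :=
          fact_mul_apply (by omega) (by omega) p
        have h2 : (t0 * tM).factorization p = t0.factorization p + tM.factorization p :=
          fact_mul_apply (by omega) (by omega) p
        rw [htt] at h1
        omega
      have hvM : M.factorization p = (z p).factorization p + tM.factorization p := by
        rw [htM]; exact fact_mul_apply (by omega) (by omega) p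
      have hvkn : k.factorization p = (z p).factorization p + tk.factorization p := by
        rw [htk]; exact fact_mul_apply (by omega) (by omega) p
      omega
theorem z_fib_mul_lucas (m n : ℕ) (hm : 3 ≤ m) (hn : 3 ≤ n) :
    (padicValNat 2 m ≤ padicValNat 2 n →
      z (Nat.fib m * lucas n) = 2 * Nat.lcm m n) ∧
    (padicValNat 2 n < padicValNat 2 m →
      z (Nat.fib m * lucas n) = Nat.lcm m n * lucas (Nat.gcd m n)) := by
  have em := Nat.factorization_def m Nat.prime_two
  have en := Nat.factorization_def n Nat.prime_two
  constructor
  · intro h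
    exact main_case1 m n hm hn (by omega)
  · intro h
    exact main_case2 m n hm hn (by omega)
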